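/- Let T : I → I be Borel measurable (I = [0,1]), let m be Lebesgue measure on I, let μ be a Borel probability measure on I, fix α ∈ (0,1] and a function Φ : ℕ → (0,1]. Assume that for every α-Hölder function f : I → ℝ, every bounded measurable g : I → ℝ and every n ≥ 1 one has Conv_n(f,g) ≤ ‖g‖_∞ · ‖f‖_{H(α)} · Φ(n). Then for every f ∈ BV_{1,α}, every bounded measurable g and every n ≥ 1 one has Conv_n(f,g) ≤ 6 · ‖g‖_∞ · ‖f‖_{1,α} · √(Φ(n)). -/

import Mathlib

open MeasureTheory Set Filter Metric
open scoped ENNReal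

noncomputable section

/-- The unit interval `I = [0,1]`. -/
def II : Set ℝ := Set.Icc 0 1

/-- The essential oscillation of `h` over the `ε`-ball around `x`, intersected with `I`:
`osc(h,ε,x) = ess sup { |h(y₁) − h(y₂)| : y₁, y₂ ∈ B_ε(x) ∩ I }`,
the essential supremum being taken with respect to Lebesgue measure. -/
def osc (h : ℝ → ℝ) (ε x : ℝ) : ℝ≥0∞ :=
  essSup (fun p : ℝ × ℝ => ENNReal.ofReal |h p.1 - h p.2|)
    ((volume.restrict (Metric.ball x ε ∩ II)).prod (volume.restrict (Metric.ball x ε ∩ II)))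

/-- `osc_1(h,ε) = ∫_I osc(h,ε,x) dm(x)`. -/
def osc1 (h : ℝ → ℝ) (ε : ℝ) : ℝ≥0∞ := ∫⁻ x in II, osc h ε x

/-- `Var_{1,r}(h) = sup_{0 < ε ≤ 1} ε^{−r} osc_1(h,ε)` (cutoff `A = 1`). -/
def Var1 (r : ℝ) (h : ℝ → ℝ) : ℝ≥0∞ :=
  ⨆ ε ∈ Set.Ioc (0 : ℝ) 1, ENNReal.ofReal (ε ^ (-r)) * osc1 h ε

/-- `‖h‖_{1,r} = Var_{1,r}(h) + ‖h‖_{L¹(m)}`. -/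
def norm1r (r : ℝ) (h : ℝ → ℝ) : ℝ := (Var1 r h).toReal + ∫ x in II, |h x|

/-- `Conv_n(f,g) = | ∫_I f·(g∘Tⁿ) dm − (∫ g dμ)(∫_I f dm) |`. -/
def Conv (T : ℝ → ℝ) (μ : Measure ℝ) (n : ℕ) (f g : ℝ → ℝ) : ℝ :=
  |(∫ x in II, f x * g (T^[n] x)) - (∫ x, g x ∂μ) * ∫ x in II, f x|

open scoped Topology

/-!
Replace `f` by `F`, where `F x` is the average of `f` over a window of length `ε` inside `I`
that contains `x`.
Taking `ε = 1` in `Var_{1,α}` shows that the essential oscillation of `f` on `I` is at most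
`V = Var_{1,α}(f)`, so `f` stays within `V` of a constant: hence `|F| ≤ ‖f‖_{1,α}` and `F` is
`α`-Hölder with constant `2V/ε^α`. By the Lebesgue differentiation theorem
`|f - F| ≤ osc(f, ε, ·)` almost everywhere, so `‖f - F‖_{L¹} ≤ ε^α V`. Applying the hypothesis
to `F` and paying `2‖g‖_∞ ‖f - F‖_{L¹}` for the replacement, the choice `ε^α = √Φ(n)` gives the
bound.
-/

lemma measurableSet_II : MeasurableSet II := measurableSet_Icc

lemma volume_II : volume II = 1 := by simp [II, Real.volume_Icc]

instance isProbabilityMeasure_volume_restrict_II : IsProbabilityMeasure (volume.restrict II) :=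
  ⟨by rw [Measure.restrict_apply_univ, volume_II]⟩

section EssentialOscillation

variable {Ω : Type*} [MeasurableSpace Ω] {ν : Measure Ω} {f : Ω → ℝ} {D : ℝ}

lemma exists_ae_abs_sub_le [SFinite ν] [NeZero ν]
    (h : ∀ᵐ p ∂ν.prod ν, |f p.1 - f p.2| ≤ D) : ∃ c, ∀ᵐ x ∂ν, |f x - c| ≤ D := by
  obtain ⟨c, hc⟩ := (Measure.ae_ae_of_ae_prod h).exists
  exact ⟨f c, hc.mono fun x hx => by rwa [abs_sub_comm]⟩

lemma ae_abs_le_add_integral_abs [IsProbabilityMeasure ν] (hf : Integrable f ν)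
    (h : ∀ᵐ p ∂ν.prod ν, |f p.1 - f p.2| ≤ D) : ∀ᵐ x ∂ν, |f x| ≤ D + ∫ z, |f z| ∂ν := by
  filter_upwards [Measure.ae_ae_of_ae_prod h] with x hx
  have : ∫ _z, (|f x| - D) ∂ν ≤ ∫ z, |f z| ∂ν :=
    integral_mono_ae (integrable_const _) hf.abs <| hx.mono fun z hz => by
      linarith [abs_sub_abs_le_abs_sub (f x) (f z)]
  simp only [integral_const, probReal_univ, one_smul] at this
  linarith

end EssentialOscillation

section Variation

variable {f : ℝ → ℝ} {r ε : ℝ}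

lemma osc_one_eq {x : ℝ} (hx : x ∈ II) :
    osc f 1 x = essSup (fun p : ℝ × ℝ => ENNReal.ofReal |f p.1 - f p.2|)
      ((volume.restrict II).prod (volume.restrict II)) := by
  have hsub : Ioo 0 1 ⊆ ball x 1 ∩ II := fun y hy =>
    ⟨by rw [mem_ball, Real.dist_eq, abs_lt]; constructor <;> linarith [hx.1, hx.2, hy.1, hy.2],
      Ioo_subset_Icc_self hy⟩
  have hae : (ball x 1 ∩ II : Set ℝ) =ᵐ[volume] II :=
    inter_subset_right.eventuallyLE.antisymm (Ioo_ae_eq_Icc.symm.le.trans hsub.eventuallyLE)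
  rw [osc, Measure.restrict_congr_set hae]

lemma ofReal_rpow_neg_mul_osc1_le_Var1 (hε : 0 < ε) (hε1 : ε ≤ 1) :
    ENNReal.ofReal (ε ^ (-r)) * osc1 f ε ≤ Var1 r f :=
  le_iSup₂ (f := fun ε (_ : ε ∈ Ioc (0 : ℝ) 1) => ENNReal.ofReal (ε ^ (-r)) * osc1 f ε) ε ⟨hε, hε1⟩

lemma osc1_le_Var1 (hε : 0 < ε) (hε1 : ε ≤ 1) :
    osc1 f ε ≤ ENNReal.ofReal (ε ^ r) * Var1 r f := by
  calc osc1 f ε = ENNReal.ofReal (ε ^ r) * (ENNReal.ofReal (ε ^ (-r)) * osc1 f ε) := by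
        rw [← mul_assoc, ← ENNReal.ofReal_mul (by positivity), ← Real.rpow_add hε,
          add_neg_cancel, Real.rpow_zero, ENNReal.ofReal_one, one_mul]
    _ ≤ ENNReal.ofReal (ε ^ r) * Var1 r f := by
        gcongr; exact ofReal_rpow_neg_mul_osc1_le_Var1 hε hε1

lemma ae_abs_sub_le_Var1 (hVar : Var1 r f ≠ ⊤) :
    ∀ᵐ p ∂(volume.restrict II).prod (volume.restrict II), |f p.1 - f p.2| ≤ (Var1 r f).toReal := by
  have hosc1 : osc1 f 1 = essSup (fun p : ℝ × ℝ => ENNReal.ofReal |f p.1 - f p.2|)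
      ((volume.restrict II).prod (volume.restrict II)) := by
    rw [osc1, setLIntegral_congr_fun measurableSet_II fun x hx => osc_one_eq hx,
      setLIntegral_const, volume_II, mul_one]
  have hle : osc1 f 1 ≤ Var1 r f := by
    simpa using ofReal_rpow_neg_mul_osc1_le_Var1 (f := f) (r := r) one_pos le_rfl
  filter_upwards [ENNReal.ae_le_essSup fun p : ℝ × ℝ => ENNReal.ofReal |f p.1 - f p.2|] with p hp
  rw [← hosc1] at hp
  simpa using ENNReal.toReal_mono hVar (hp.trans hle)

lemma exists_ae_abs_sub_le_Var1 (hVar : Var1 r f ≠ ⊤) :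
    ∃ c, ∀ᵐ x ∂volume.restrict II, |f x - c| ≤ (Var1 r f).toReal :=
  exists_ae_abs_sub_le (ae_abs_sub_le_Var1 hVar)

lemma integrableOn_II_of_Var1_ne_top (hf : AEStronglyMeasurable f (volume.restrict II))
    (hVar : Var1 r f ≠ ⊤) : IntegrableOn f II := by
  obtain ⟨c, hc⟩ := exists_ae_abs_sub_le_Var1 hVar
  refine Integrable.of_bound hf (|c| + (Var1 r f).toReal) (hc.mono fun x hx => ?_)
  rw [Real.norm_eq_abs]
  linarith [abs_sub_abs_le_abs_sub (f x) c]

lemma ae_abs_le_norm1r (hf : AEStronglyMeasurable f (volume.restrict II))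
    (hVar : Var1 r f ≠ ⊤) :
    ∀ᵐ x ∂volume.restrict II, |f x| ≤ norm1r r f :=
  ae_abs_le_add_integral_abs (integrableOn_II_of_Var1_ne_top hf hVar) (ae_abs_sub_le_Var1 hVar)

end Variation


/-- Left end of the window `[windowStart ε x, windowStart ε x + ε] ⊆ I`, which contains `x`
whenever `x ∈ I`. -/
def windowStart (ε x : ℝ) : ℝ := max 0 (min (x - ε / 2) (1 - ε))

def windowAvg (f : ℝ → ℝ) (ε x : ℝ) : ℝ :=
  ε⁻¹ * ∫ y in windowStart ε x..windowStart ε x + ε, f y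

section Window

variable {f : ℝ → ℝ} {ε : ℝ}

lemma windowStart_nonneg (ε x : ℝ) : 0 ≤ windowStart ε x := le_max_left _ _

lemma windowStart_add_le_one (hε1 : ε ≤ 1) (x : ℝ) : windowStart ε x + ε ≤ 1 := by
  have : windowStart ε x ≤ 1 - ε := max_le (by linarith) (min_le_right _ _)
  linarith

lemma windowStart_mem_II (hε0 : 0 ≤ ε) (hε1 : ε ≤ 1) (x : ℝ) : windowStart ε x ∈ II :=
  ⟨windowStart_nonneg ε x, by linarith [windowStart_add_le_one hε1 x]⟩

lemma windowStart_add_mem_II (hε0 : 0 ≤ ε) (hε1 : ε ≤ 1) (x : ℝ) : windowStart ε x + ε ∈ II :=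
  ⟨by linarith [windowStart_nonneg ε x], windowStart_add_le_one hε1 x⟩

lemma abs_windowStart_sub_le (ε x y : ℝ) : |windowStart ε x - windowStart ε y| ≤ |x - y| := by
  unfold windowStart
  rw [max_comm 0, max_comm 0]
  refine (abs_max_sub_max_le_abs _ _ 0).trans <| (abs_min_sub_min_le_max _ _ _ _).trans ?_
  simp

lemma Ioo_windowStart_subset_II (hε1 : ε ≤ 1) (x : ℝ) :
    Ioo (windowStart ε x) (windowStart ε x + ε) ⊆ II := fun _ hy =>
  ⟨by linarith [hy.1, windowStart_nonneg ε x], by linarith [hy.2, windowStart_add_le_one hε1 x]⟩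

lemma Ioo_windowStart_subset (hε0 : 0 ≤ ε) (hε1 : ε ≤ 1) {x : ℝ} (hx : x ∈ II) :
    Ioo (windowStart ε x) (windowStart ε x + ε) ⊆ ball x ε ∩ II := by
  have hlo : windowStart ε x ≤ x := max_le hx.1 ((min_le_left _ _).trans (by linarith))
  have hhi : x ≤ windowStart ε x + ε := by
    have := le_max_right 0 (min (x - ε / 2) (1 - ε))
    unfold windowStart
    rcases min_choice (x - ε / 2) (1 - ε) with h | h <;> rw [h] at this ⊢ <;> linarith [hx.2]
  intro y hy
  refine ⟨?_, Ioo_windowStart_subset_II hε1 x hy⟩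
  rw [mem_ball, Real.dist_eq, abs_lt]
  constructor <;> linarith [hy.1, hy.2]

lemma intervalIntegrable_of_integrableOn_II (hf : IntegrableOn f II) {a b : ℝ} (ha : a ∈ II)
    (hb : b ∈ II) : IntervalIntegrable f volume a b :=
  (hf.mono_set (uIcc_subset_Icc ha hb)).intervalIntegrable

lemma abs_intervalIntegral_le_of_ae_II {M : ℝ} (hM : ∀ᵐ y ∂volume.restrict II, |f y| ≤ M)
    {a b : ℝ} (ha : a ∈ II) (hb : b ∈ II) : |∫ y in a..b, f y| ≤ M * |b - a| := by
  refine intervalIntegral.norm_integral_le_of_norm_le_const_ae (E := ℝ) ?_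
  filter_upwards [(ae_restrict_iff' measurableSet_II).1 hM] with y hy hyab
  exact hy (uIcc_subset_Icc ha hb (uIoc_subset_uIcc hyab))

lemma windowAvg_eq_add (hε0 : 0 < ε) (hε1 : ε ≤ 1) (hf : IntegrableOn f II) (c x : ℝ) :
    windowAvg f ε x = c + ε⁻¹ * ∫ y in windowStart ε x..windowStart ε x + ε, (f y - c) := by
  have hfi := intervalIntegrable_of_integrableOn_II hf (windowStart_mem_II hε0.le hε1 x)
    (windowStart_add_mem_II hε0.le hε1 x)
  rw [windowAvg, intervalIntegral.integral_sub hfi intervalIntegrable_const,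
    intervalIntegral.integral_const, add_sub_cancel_left, smul_eq_mul]
  field_simp
  ring

lemma abs_windowAvg_sub_le (hε0 : 0 < ε) (hε1 : ε ≤ 1) (hf : IntegrableOn f II) {x w D : ℝ}
    (h : ∀ᵐ y, y ∈ Ioo (windowStart ε x) (windowStart ε x + ε) → |f y - w| ≤ D) :
    |windowAvg f ε x - w| ≤ D := by
  set a := windowStart ε x
  have hint : |∫ y in a..a + ε, (f y - w)| ≤ D * |a + ε - a| := by
    refine intervalIntegral.norm_integral_le_of_norm_le_const_ae (E := ℝ) ?_
    filter_upwards [h, Measure.ae_ne volume (a + ε)] with y hy hne hyI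
    rw [uIoc_of_le (by linarith)] at hyI
    exact hy ⟨hyI.1, lt_of_le_of_ne hyI.2 hne⟩
  rw [add_sub_cancel_left, abs_of_pos hε0] at hint
  rw [windowAvg_eq_add hε0 hε1 hf w, add_sub_cancel_left, abs_mul, abs_inv, abs_of_pos hε0]
  calc ε⁻¹ * |∫ y in a..a + ε, (f y - w)| ≤ ε⁻¹ * (D * ε) := by gcongr
    _ = D := by field_simp

lemma abs_windowAvg_sub_le_of_ae_II (hε0 : 0 < ε) (hε1 : ε ≤ 1) (hf : IntegrableOn f II)
    {c M : ℝ} (hc : ∀ᵐ y ∂volume.restrict II, |f y - c| ≤ M) (x : ℝ) :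
    |windowAvg f ε x - c| ≤ M :=
  abs_windowAvg_sub_le hε0 hε1 hf <| ((ae_restrict_iff' measurableSet_II).1 hc).mono
    fun _ hy hyI => hy (Ioo_windowStart_subset_II hε1 x hyI)

lemma abs_windowAvg_sub_windowAvg_le (hε0 : 0 < ε) (hε1 : ε ≤ 1) (hf : IntegrableOn f II)
    {c M : ℝ} (hc : ∀ᵐ y ∂volume.restrict II, |f y - c| ≤ M) (x y : ℝ) :
    |windowAvg f ε x - windowAvg f ε y| ≤ 2 * M / ε * |x - y| := by
  set a := windowStart ε x
  set b := windowStart ε y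
  have ha := windowStart_mem_II hε0.le hε1 x
  have hb := windowStart_mem_II hε0.le hε1 y
  have ha' := windowStart_add_mem_II hε0.le hε1 x
  have hb' := windowStart_add_mem_II hε0.le hε1 y
  have hi : ∀ {u v : ℝ}, u ∈ II → v ∈ II → IntervalIntegrable (fun z => f z - c) volume u v :=
    fun hu hv => intervalIntegrable_of_integrableOn_II (hf.sub (integrableOn_const
      (by rw [volume_II]; exact ENNReal.one_ne_top))) hu hv
  -- Both windows have length `ε`, so the difference of their integrals only sees the end pieces.
  have hshift : (∫ z in a..a + ε, (f z - c)) - ∫ z in b..b + ε, (f z - c)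
      = (∫ z in a..b, (f z - c)) - ∫ z in a + ε..b + ε, (f z - c) :=
    intervalIntegral.integral_interval_sub_interval_comm (hi ha ha') (hi hb hb') (hi ha hb)
  have h1 := abs_intervalIntegral_le_of_ae_II hc ha hb
  have h2 := abs_intervalIntegral_le_of_ae_II hc ha' hb'
  rw [add_sub_add_right_eq_sub] at h2
  have hM : 0 ≤ M := by
    obtain ⟨z, hz⟩ := hc.exists
    exact (abs_nonneg _).trans hz
  rw [windowAvg_eq_add hε0 hε1 hf c x, windowAvg_eq_add hε0 hε1 hf c y, add_sub_add_left_eq_sub,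
    ← mul_sub, hshift, abs_mul, abs_inv, abs_of_pos hε0]
  calc ε⁻¹ * |(∫ z in a..b, (f z - c)) - ∫ z in a + ε..b + ε, (f z - c)|
      ≤ ε⁻¹ * (M * |b - a| + M * |b - a|) := by gcongr; exact (abs_sub _ _).trans (add_le_add h1 h2)
    _ = 2 * M / ε * |a - b| := by rw [abs_sub_comm]; field_simp; ring
    _ ≤ 2 * M / ε * |x - y| :=
        mul_le_mul_of_nonneg_left (abs_windowStart_sub_le ε x y) (by positivity)

lemma continuous_windowAvg (hε0 : 0 < ε) (hε1 : ε ≤ 1) (hf : IntegrableOn f II)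
    {c M : ℝ} (hc : ∀ᵐ y ∂volume.restrict II, |f y - c| ≤ M) : Continuous (windowAvg f ε) :=
  (LipschitzWith.of_dist_le_mul fun x y => by
    rw [Real.dist_eq, Real.dist_eq]
    exact (abs_windowAvg_sub_windowAvg_le hε0 hε1 hf hc x y).trans
      (mul_le_mul_of_nonneg_right (Real.le_coe_toNNReal _) (abs_nonneg _))).continuous

lemma min_one_le_rpow {t α : ℝ} (ht : 0 ≤ t) (hα0 : 0 ≤ α) (hα1 : α ≤ 1) : min 1 t ≤ t ^ α := by
  rcases le_total t 1 with h | h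
  · calc min 1 t ≤ t ^ (1 : ℝ) := by simp
      _ ≤ t ^ α := Real.rpow_le_rpow_of_exponent_ge' ht h hα0 hα1
  · exact (min_le_left _ _).trans (Real.one_le_rpow h hα0)

lemma abs_windowAvg_sub_windowAvg_le_rpow (hε0 : 0 < ε) (hε1 : ε ≤ 1) (hf : IntegrableOn f II)
    {c M α : ℝ} (hc : ∀ᵐ y ∂volume.restrict II, |f y - c| ≤ M) (hα0 : 0 ≤ α) (hα1 : α ≤ 1)
    (x y : ℝ) : |windowAvg f ε x - windowAvg f ε y| ≤ 2 * M / ε ^ α * |x - y| ^ α := by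
  have hlip := abs_windowAvg_sub_windowAvg_le hε0 hε1 hf hc x y
  have hbdd : |windowAvg f ε x - windowAvg f ε y| ≤ 2 * M := by
    have hx := abs_windowAvg_sub_le_of_ae_II hε0 hε1 hf hc x
    have hy := abs_windowAvg_sub_le_of_ae_II hε0 hε1 hf hc y
    calc |windowAvg f ε x - windowAvg f ε y|
        = |(windowAvg f ε x - c) - (windowAvg f ε y - c)| := by ring_nf
      _ ≤ 2 * M := (abs_sub _ _).trans (by linarith)
  calc |windowAvg f ε x - windowAvg f ε y| ≤ 2 * M * min 1 (|x - y| / ε) := by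
        rw [mul_min_of_nonneg _ _ ((abs_nonneg _).trans hbdd), mul_one, ← mul_div_assoc,
          mul_div_right_comm]
        exact le_min hbdd hlip
    _ ≤ 2 * M * (|x - y| / ε) ^ α :=
        mul_le_mul_of_nonneg_left (min_one_le_rpow (by positivity) hα0 hα1)
          ((abs_nonneg _).trans hbdd)
    _ = 2 * M / ε ^ α * |x - y| ^ α := by
        rw [Real.div_rpow (abs_nonneg _) hε0.le]; ring

end Window

section Approximation

variable {f : ℝ → ℝ} {ε : ℝ}

lemma abs_sub_le_of_tendsto_average {x w D : ℝ} {U : Set ℝ} (hf : Integrable f)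
    (hx : Tendsto (fun r => ⨍ y in closedBall x r, f y) (𝓝[>] 0) (𝓝 (f x))) (hU : U ∈ 𝓝 x)
    (hD : ∀ᵐ y ∂volume.restrict U, |f y - w| ≤ D) : |f x - w| ≤ D := by
  have hmem : ∀ᶠ r in 𝓝[>] 0, ⨍ y in closedBall x r, f y ∈ closedBall w D := by
    filter_upwards [nhdsWithin_le_nhds (eventually_closedBall_subset hU), self_mem_nhdsWithin]
      with r hrU hr
    refine (convex_closedBall w D).set_average_mem isClosed_closedBall
      (measure_closedBall_pos volume x hr).ne' measure_closedBall_lt_top.ne ?_ hf.integrableOn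
    exact (ae_restrict_of_ae_restrict_of_subset hrU hD).mono fun y hy => by
      rwa [mem_closedBall, Real.dist_eq]
  simpa [mem_closedBall, Real.dist_eq] using isClosed_closedBall.mem_of_tendsto hx hmem

lemma ae_abs_sub_windowAvg_le_osc_of_ne_top (hε0 : 0 < ε) (hε1 : ε ≤ 1)
    (hf : IntegrableOn f II) {x : ℝ} (hx : x ∈ II) (hosc : osc f ε x ≠ ⊤) :
    ∀ᵐ y ∂volume.restrict (ball x ε ∩ II), |f y - windowAvg f ε x| ≤ (osc f ε x).toReal := by
  have hpair := ENNReal.ae_le_essSup (μ := (volume.restrict (ball x ε ∩ II)).prod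
    (volume.restrict (ball x ε ∩ II))) fun p : ℝ × ℝ => ENNReal.ofReal |f p.1 - f p.2|
  filter_upwards [Measure.ae_ae_of_ae_prod hpair] with y hy
  rw [abs_sub_comm]
  refine abs_windowAvg_sub_le hε0 hε1 hf ?_
  filter_upwards [(ae_restrict_iff' (measurableSet_ball.inter measurableSet_II)).1 hy] with z hz hzI
  rw [abs_sub_comm]
  simpa using ENNReal.toReal_mono hosc (hz (Ioo_windowStart_subset hε0.le hε1 hx hzI))

lemma ae_abs_sub_windowAvg_le_osc (hε0 : 0 < ε) (hε1 : ε ≤ 1) (hf : IntegrableOn f II) :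
    ∀ᵐ x ∂volume.restrict II, ENNReal.ofReal |f x - windowAvg f ε x| ≤ osc f ε x := by
  have hfi : Integrable (II.indicator f) := (integrable_indicator_iff measurableSet_II).2 hf
  have hLeb := IsUnifLocDoublingMeasure.ae_tendsto_average volume hfi.locallyIntegrable 1
  have hinterior : ∀ᵐ x ∂volume.restrict II, x ∈ Ioo 0 1 := by
    rw [II, ← Measure.restrict_congr_set Ioo_ae_eq_Icc]
    exact ae_restrict_mem measurableSet_Ioo
  filter_upwards [ae_restrict_of_ae hLeb, hinterior] with x hxLeb hx
  obtain hosc | hosc := eq_or_ne (osc f ε x) ⊤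
  · simp [hosc]
  have hxI : x ∈ II := Ioo_subset_Icc_self hx
  rw [← ENNReal.ofReal_toReal hosc]
  refine ENNReal.ofReal_le_ofReal ?_
  have hnear := ae_abs_sub_windowAvg_le_osc_of_ne_top hε0 hε1 hf hxI hosc
  have hU : ball x ε ∩ Ioo 0 1 ∈ 𝓝 x := inter_mem (ball_mem_nhds x hε0) (Ioo_mem_nhds hx.1 hx.2)
  have hsub : ball x ε ∩ Ioo 0 1 ⊆ ball x ε ∩ II := inter_subset_inter_right _ Ioo_subset_Icc_self
  have hlim : Tendsto (fun r => ⨍ y in closedBall x r, II.indicator f y) (𝓝[>] 0)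
      (𝓝 (II.indicator f x)) :=
    hxLeb (fun _ => x) id tendsto_id <| eventually_mem_nhdsWithin.mono fun r hr =>
      mem_closedBall_self (by simpa using (le_of_lt hr))
  have := abs_sub_le_of_tendsto_average (w := windowAvg f ε x) (D := (osc f ε x).toReal)
    hfi hlim hU <| by
    filter_upwards [ae_restrict_of_ae_restrict_of_subset hsub hnear,
      ae_restrict_mem (measurableSet_ball.inter measurableSet_Ioo)] with y hy hyU
    rwa [indicator_of_mem (show y ∈ II from Ioo_subset_Icc_self hyU.2)]
  rwa [indicator_of_mem hxI] at this

lemma integral_abs_sub_windowAvg_le {r : ℝ} (hε0 : 0 < ε) (hε1 : ε ≤ 1) (hf : IntegrableOn f II)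
    (hVar : Var1 r f ≠ ⊤) :
    ∫ x in II, |f x - windowAvg f ε x| ≤ ε ^ r * (Var1 r f).toReal := by
  have hle : ∫⁻ x in II, ENNReal.ofReal ‖|f x - windowAvg f ε x|‖
      ≤ ENNReal.ofReal (ε ^ r) * Var1 r f :=
    (lintegral_mono_ae (by simpa using ae_abs_sub_windowAvg_le_osc hε0 hε1 hf)).trans
      (osc1_le_Var1 hε0 hε1)
  calc ∫ x in II, |f x - windowAvg f ε x|
      ≤ (∫⁻ x in II, ENNReal.ofReal ‖|f x - windowAvg f ε x|‖).toReal :=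
        (le_abs_self _).trans
          ((Real.norm_eq_abs _).symm.trans_le (norm_integral_le_lintegral_norm _))
    _ ≤ ε ^ r * (Var1 r f).toReal := by
        simpa [ENNReal.toReal_mul, ENNReal.toReal_ofReal (Real.rpow_nonneg hε0.le r)] using
          ENNReal.toReal_mono (ENNReal.mul_ne_top ENNReal.ofReal_ne_top hVar) hle

end Approximation

lemma abs_integral_mul_le_of_abs_le {Ω : Type*} [MeasurableSpace Ω] {ν : Measure Ω}
    {h G : Ω → ℝ} {K : ℝ}
    (hh : Integrable h ν) (hGK : ∀ x, |G x| ≤ K) :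
    |∫ x, h x * G x ∂ν| ≤ K * ∫ x, |h x| ∂ν := by
  rw [← integral_const_mul]
  refine norm_integral_le_of_norm_le (f := fun x => h x * G x) (hh.abs.const_mul K)
    (ae_of_all _ fun x => ?_)
  rw [Real.norm_eq_abs, abs_mul, mul_comm K]
  exact mul_le_mul_of_nonneg_left (hGK x) (abs_nonneg _)

lemma Conv_le_Conv_add_integral_abs_sub {T : ℝ → ℝ} {μ : Measure ℝ} [IsProbabilityMeasure μ] {n : ℕ}
    {f F g : ℝ → ℝ} {Kg : ℝ} (hT : Measurable T) (hg : Measurable g) (hgK : ∀ x, |g x| ≤ Kg)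
    (hf : IntegrableOn f II) (hF : IntegrableOn F II) :
    Conv T μ n f g ≤ Conv T μ n F g + 2 * Kg * ∫ x in II, |f x - F x| := by
  set G := fun x => g (T^[n] x)
  have hG : AEStronglyMeasurable G (volume.restrict II) :=
    (hg.comp (hT.iterate n)).aestronglyMeasurable
  have hGK : ∀ x, ‖G x‖ ≤ Kg := fun x => hgK _
  have hmean : |∫ x, g x ∂μ| ≤ Kg := by
    simpa using norm_integral_le_of_norm_le_const (f := g) (μ := μ) (ae_of_all _ hgK)
  have hfG : (∫ x in II, f x * G x) = (∫ x in II, F x * G x) + ∫ x in II, (f x - F x) * G x := by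
    simp only [sub_mul]
    rw [integral_sub (hf.mul_bdd hG (ae_of_all _ hGK)) (hF.mul_bdd hG (ae_of_all _ hGK))]
    ring
  have hfint : (∫ x in II, f x) = (∫ x in II, F x) + ∫ x in II, (f x - F x) := by
    rw [integral_sub hf hF]; ring
  have herr : |(∫ x in II, (f x - F x) * G x) - (∫ x, g x ∂μ) * ∫ x in II, (f x - F x)|
      ≤ 2 * Kg * ∫ x in II, |f x - F x| := by
    have h1 := abs_integral_mul_le_of_abs_le (h := fun x => f x - F x) (hf.sub hF) hGK
    have h2 : |(∫ x, g x ∂μ) * ∫ x in II, (f x - F x)| ≤ Kg * ∫ x in II, |f x - F x| := by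
      rw [abs_mul]
      exact mul_le_mul hmean (abs_integral_le_integral_abs) (abs_nonneg _)
        ((abs_nonneg _).trans (hgK 0))
    linarith [abs_sub (∫ x in II, (f x - F x) * G x) ((∫ x, g x ∂μ) * ∫ x in II, (f x - F x))]
  unfold Conv
  rw [hfG, hfint]
  calc _ = |((∫ x in II, F x * G x) - (∫ x, g x ∂μ) * ∫ x in II, F x)
        + ((∫ x in II, (f x - F x) * G x) - (∫ x, g x ∂μ) * ∫ x in II, (f x - F x))| := by ring_nf
    _ ≤ _ := (abs_add_le _ _).trans (by gcongr)

lemma exists_holder_approximation {f : ℝ → ℝ} {α s : ℝ}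
    (hf : AEStronglyMeasurable f (volume.restrict II)) (hVar : Var1 α f ≠ ⊤) (hα0 : 0 < α)
    (hα1 : α ≤ 1) (hs0 : 0 < s) (hs1 : s ≤ 1) :
    ∃ F : ℝ → ℝ, (∀ x, |F x| ≤ norm1r α f) ∧
      (∀ x y, |F x - F y| ≤ 2 * (Var1 α f).toReal / s * |x - y| ^ α) ∧
      IntegrableOn F II ∧ ∫ x in II, |f x - F x| ≤ s * (Var1 α f).toReal := by
  set ε := s ^ α⁻¹
  have hε0 : 0 < ε := by positivity
  have hε1 : ε ≤ 1 := Real.rpow_le_one hs0.le hs1 (by positivity)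
  have hεα : ε ^ α = s := by rw [← Real.rpow_mul hs0.le, inv_mul_cancel₀ hα0.ne', Real.rpow_one]
  have hfi := integrableOn_II_of_Var1_ne_top hf hVar
  obtain ⟨c, hc⟩ := exists_ae_abs_sub_le_Var1 hVar
  refine ⟨windowAvg f ε, fun x => ?_, ?_,
    (continuous_windowAvg hε0 hε1 hfi hc).integrableOn_Icc, ?_⟩
  · simpa using abs_windowAvg_sub_le_of_ae_II hε0 hε1 hfi (c := 0)
      (by simpa using ae_abs_le_norm1r hf hVar) x
  · simpa only [hεα] using abs_windowAvg_sub_windowAvg_le_rpow hε0 hε1 hfi hc hα0.le hα1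
  · simpa only [hεα] using integral_abs_sub_windowAvg_le hε0 hε1 hfi hVar

theorem holder_to_bounded_variation_convergence_general
    (T : ℝ → ℝ) (hT : Measurable T)
    (μ : Measure ℝ) [IsProbabilityMeasure μ]
    (α : ℝ) (hα : α ∈ Set.Ioc (0 : ℝ) 1)
    (Φ : ℕ → ℝ) (hΦ : ∀ n, Φ n ∈ Set.Ioc (0 : ℝ) 1)
    (hyp : ∀ (f g : ℝ → ℝ) (Hf Kf Kg : ℝ),
      (∀ x y, |f x - f y| ≤ Hf * |x - y| ^ α) →
      (∀ x, |f x| ≤ Kf) →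
      Measurable g → (∀ x, |g x| ≤ Kg) →
      ∀ n : ℕ, 1 ≤ n → Conv T μ n f g ≤ Kg * (Kf + Hf) * Φ n) :
    ∀ (f g : ℝ → ℝ) (Kg : ℝ),
      Measurable f → Var1 α f < ⊤ →
      Measurable g → (∀ x, |g x| ≤ Kg) →
      ∀ n : ℕ, 1 ≤ n →
        Conv T μ n f g ≤ 6 * Kg * norm1r α f * Real.sqrt (Φ n) := by
  intro f g Kg hf hVar hg hgK n hn
  obtain ⟨hΦ0, hΦ1⟩ := hΦ n
  set V := (Var1 α f).toReal
  set N := norm1r α f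
  set s := √(Φ n)
  have hs0 : 0 < s := Real.sqrt_pos.2 hΦ0
  have hs1 : s ≤ 1 := Real.sqrt_le_one.2 hΦ1
  -- `s = √Φ(n)` makes the Hölder cost `Kg (2V/s) Φ n` and the replacement cost `2 Kg s V`
  -- both of order `s`.
  obtain ⟨F, hF_bdd, hF_hol, hF_int, hE⟩ :=
    exists_holder_approximation hf.aestronglyMeasurable hVar.ne hα.1 hα.2 hs0 hs1
  have hConvF := hyp F g _ _ Kg hF_hol hF_bdd hg hgK n hn
  rw [show Φ n = s ^ 2 from (Real.sq_sqrt hΦ0.le).symm] at hConvF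
  have hVN : V ≤ N := le_add_of_nonneg_right (integral_nonneg fun x => abs_nonneg (f x))
  have hKg : 0 ≤ Kg := (abs_nonneg _).trans (hgK 0)
  calc Conv T μ n f g ≤ Conv T μ n F g + 2 * Kg * ∫ x in II, |f x - F x| :=
        Conv_le_Conv_add_integral_abs_sub hT hg hgK
          (integrableOn_II_of_Var1_ne_top hf.aestronglyMeasurable hVar.ne) hF_int
    _ ≤ Kg * (N + 2 * V / s) * s ^ 2 + 2 * Kg * (s * V) := by gcongr
    _ = Kg * s * (N * s + 4 * V) := by field_simp; ring
    _ ≤ 6 * Kg * N * s := by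
        have hKs : 0 ≤ Kg * s := mul_nonneg hKg hs0.le
        have hN : 0 ≤ N := ENNReal.toReal_nonneg.trans hVN
        nlinarith [mul_nonneg (mul_nonneg hKs hN) (sub_nonneg.2 hs1),
          mul_nonneg hKs (sub_nonneg.2 hVN), mul_nonneg hKs hN]

/-- If convergence to equilibrium holds with speed `Φ` for `α`-Hölder `f` against bounded
measurable `g`, then for `f ∈ BV_{1,α}` and bounded measurable `g`, for all `n ≥ 1`,
`Conv_n(f,g) ≤ 6 ‖g‖_∞ ‖f‖_{1,α} √(Φ(n))`. -/
theorem holder_to_bounded_variation_convergence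
    (T : ℝ → ℝ) (hT : Measurable T) (hTI : Set.MapsTo T II II)
    (μ : Measure ℝ) [IsProbabilityMeasure μ] (hμI : μ II = 1)
    (α : ℝ) (hα : α ∈ Set.Ioc (0 : ℝ) 1)
    (Φ : ℕ → ℝ) (hΦ : ∀ n, Φ n ∈ Set.Ioc (0 : ℝ) 1)
    (hyp : ∀ (f g : ℝ → ℝ) (Hf Kf Kg : ℝ),
      (∀ x y, |f x - f y| ≤ Hf * |x - y| ^ α) →
      (∀ x, |f x| ≤ Kf) →
      Measurable g → (∀ x, |g x| ≤ Kg) →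
      ∀ n : ℕ, 1 ≤ n → Conv T μ n f g ≤ Kg * (Kf + Hf) * Φ n) :
    ∀ (f g : ℝ → ℝ) (Kg : ℝ),
      Measurable f → Var1 α f < ⊤ →
      Measurable g → (∀ x, |g x| ≤ Kg) →
      ∀ n : ℕ, 1 ≤ n →
        Conv T μ n f g ≤ 6 * Kg * norm1r α f * Real.sqrt (Φ n) :=
  holder_to_bounded_variation_convergence_general T hT μ α hα Φ hΦ hyp
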